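/- Let α₀ ≠ 0, α₁, α₂ be real numbers with α₁/α₀ < 0 and α₂/α₀ > 0, and let V, C be p×p real matrices. For j ∈ ℤ and t ∈ ℝ define m_j(t) := ∫₀^∞ λ^j e^{jα₀t} · exp((α₁/α₀)λe^{α₀t} − (α₂/α₀)λ^{−1}e^{−α₀t}) · V · exp((log λ)·C) dλ. Then each m_j is differentiable in t and satisfies m_j′(t) = −α₀ · m_j(t) · (I + C) for all j ∈ ℤ and t ∈ ℝ, where I is the p×p identity matrix. -/

import Mathlib

/-!
The substitution `λ = e^{-α₀t} μ` absorbs `e^{jα₀t}` into `λ^j`, removes `t` from the scalar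
exponential and splits `exp((log λ) C) = exp((log μ) C) exp(-α₀t C)`; hence
`m_j(t) = e^{-α₀t} m_j(0) exp(-α₀t C)`, whose derivative is `-α₀ m_j(t) (I + C)`.
Taking the constant factor `exp(-α₀t C)` out of the entrywise integral needs the entries of the
integrand of `m_j(0)` to be integrable: `‖exp((log μ) C)‖ ≤ μ^‖C‖ + μ^{-‖C‖}`, and
`exp(-(α₂/α₀)/μ)` beats every power of `μ` near `0` while `exp((α₁/α₀)μ)` does so near `∞`.
-/

open MeasureTheory

/-- The moments
`m_j(t) := ∫₀^∞ λ^j e^{jα₀t} exp((α₁/α₀)λe^{α₀t} - (α₂/α₀)λ⁻¹e^{-α₀t}) V exp((log λ) C) dλ`,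
defined entrywise as a Lebesgue integral over `(0,∞)`. -/
noncomputable def momInt (p : ℕ) (α₀ α₁ α₂ : ℝ) (V C : Matrix (Fin p) (Fin p) ℝ)
    (j : ℤ) (t : ℝ) : Matrix (Fin p) (Fin p) ℝ :=
  Matrix.of fun x y =>
    ∫ l in Set.Ioi (0 : ℝ),
      ((l ^ j * Real.exp ((j : ℝ) * α₀ * t) *
          Real.exp (α₁ / α₀ * l * Real.exp (α₀ * t) -
            α₂ / α₀ * l⁻¹ * Real.exp (-(α₀ * t)))) •
        (V * NormedSpace.exp ((Real.log l) • C))) x y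

open Real Set
open scoped Nat

theorem exp_neg_le_factorial_div_pow {y : ℝ} (hy : 0 < y) (n : ℕ) :
    exp (-y) ≤ n ! / y ^ n := by
  rw [exp_neg, inv_eq_one_div, div_le_div_iff₀ (exp_pos y) (by positivity), one_mul, mul_comm]
  exact (div_le_iff₀ (by positivity)).mp (pow_div_factorial_le_exp y hy.le n)

theorem integrableOn_rpow_mul_exp_mul_sub_inv {a b : ℝ} (ha : a < 0) (hb : 0 < b) (r : ℝ) :
    IntegrableOn (fun x : ℝ => x ^ r * exp (a * x - b * x⁻¹)) (Ioi 0) := by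
  set n := ⌈-r⌉₊
  have hrn : -1 < r + n := by linarith [Nat.le_ceil (-r)]
  have hdom : IntegrableOn (fun x : ℝ => (n ! / b ^ n) * (x ^ (r + n) * exp (-(-a) * x ^ (1 : ℝ))))
      (Ioi 0) :=
    (integrableOn_rpow_mul_exp_neg_mul_rpow hrn one_pos (neg_pos.mpr ha)).const_mul _
  refine hdom.mono' ?_ ((ae_restrict_iff' measurableSet_Ioi).mpr (ae_of_all _ fun x hx => ?_))
  · refine ContinuousOn.aestronglyMeasurable (fun x hx => ?_) measurableSet_Ioi
    have hx : x ≠ 0 := ne_of_gt hx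
    apply ContinuousAt.continuousWithinAt
    fun_prop (disch := simp [hx])
  · have hx : 0 < x := hx
    have hexp : exp (-(b * x⁻¹)) ≤ n ! / (b * x⁻¹) ^ n :=
      exp_neg_le_factorial_div_pow (by positivity) n
    rw [norm_of_nonneg (by positivity), rpow_one, rpow_add hx, rpow_natCast, sub_eq_add_neg,
      exp_add]
    calc x ^ r * (exp (a * x) * exp (-(b * x⁻¹)))
        ≤ x ^ r * (exp (a * x) * (n ! / (b * x⁻¹) ^ n)) := by gcongr
      _ = n ! / b ^ n * (x ^ r * x ^ n * exp (-(-a) * x)) := by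
        rw [mul_pow, inv_pow]
        field_simp

section BanachAlgebra

variable {𝔸 : Type*} [NormedRing 𝔸] [NormedAlgebra ℝ 𝔸]

theorem norm_exp_le_exp_norm [NormOneClass 𝔸] (x : 𝔸) : ‖NormedSpace.exp x‖ ≤ exp ‖x‖ := by
  rw [exp_eq_exp_ℝ, NormedSpace.exp_eq_tsum_div, NormedSpace.exp_eq_tsum ℝ]
  refine (norm_tsum_le_tsum_norm (NormedSpace.norm_expSeries_summable' x)).trans ?_
  refine (NormedSpace.norm_expSeries_summable' x).tsum_le_tsum (fun n => ?_)
    (NormedSpace.expSeries_div_summable ‖x‖)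
  rw [norm_smul, norm_inv, Real.norm_natCast, div_eq_inv_mul]
  gcongr
  exact norm_pow_le x n

theorem norm_exp_log_smul_le [NormOneClass 𝔸] (C : 𝔸) {l : ℝ} (hl : 0 < l) :
    ‖NormedSpace.exp (log l • C)‖ ≤ l ^ ‖C‖ + l ^ (-‖C‖) := by
  refine (norm_exp_le_exp_norm _).trans ?_
  rw [norm_smul, norm_eq_abs]
  have hpos := rpow_pos_of_pos hl ‖C‖
  have hneg := rpow_pos_of_pos hl (-‖C‖)
  rcases abs_cases (log l) with ⟨habs, -⟩ | ⟨habs, -⟩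
  · rw [habs, ← rpow_def_of_pos hl]; linarith
  · rw [habs, neg_mul, ← mul_neg, ← rpow_def_of_pos hl]; linarith

variable [CompleteSpace 𝔸]

theorem hasDerivAt_exp_smul_mul_exp_smul (a : ℝ) (A C : 𝔸) (t : ℝ) :
    HasDerivAt (fun s => exp (a * s) • (A * NormedSpace.exp ((a * s) • C)))
      (a • (exp (a * t) • (A * NormedSpace.exp ((a * t) • C)) * (1 + C))) t := by
  have hlin : HasDerivAt (fun s : ℝ => a * s) a t := by simpa using (hasDerivAt_id t).const_mul a
  have hexp := ((hasDerivAt_exp_smul_const (𝕂 := ℝ) C (a * t)).scomp t hlin).const_mul A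
  refine (((Real.hasDerivAt_exp _).comp t hlin).smul hexp).congr_deriv ?_
  simp only [Function.comp_apply]
  rw [mul_smul_comm, smul_mul_assoc, mul_add, mul_one, mul_assoc]
  module

end BanachAlgebra

section Moments

variable {p : ℕ} (α₀ α₁ α₂ : ℝ) (V C : Matrix (Fin p) (Fin p) ℝ) (j : ℤ)

noncomputable def momIntegrand (t l : ℝ) : Matrix (Fin p) (Fin p) ℝ :=
  (l ^ j * exp (j * α₀ * t) *
      exp (α₁ / α₀ * l * exp (α₀ * t) - α₂ / α₀ * l⁻¹ * exp (-(α₀ * t)))) •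
    (V * NormedSpace.exp (log l • C))

theorem momInt_apply (t : ℝ) (x y : Fin p) :
    momInt p α₀ α₁ α₂ V C j t x y = ∫ l in Ioi 0, momIntegrand α₀ α₁ α₂ V C j t l x y :=
  rfl

theorem momIntegrand_zero (l : ℝ) :
    momIntegrand α₀ α₁ α₂ V C j 0 l =
      (l ^ j * exp (α₁ / α₀ * l - α₂ / α₀ * l⁻¹)) • (V * NormedSpace.exp (log l • C)) := by
  simp [momIntegrand]

theorem momIntegrand_exp_mul (t : ℝ) {μ : ℝ} (hμ : 0 < μ) :
    momIntegrand α₀ α₁ α₂ V C j t (exp (-α₀ * t) * μ) =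
      momIntegrand α₀ α₁ α₂ V C j 0 μ * NormedSpace.exp ((-α₀ * t) • C) := by
  have hlog : log (exp (-α₀ * t) * μ) • C = log μ • C + (-α₀ * t) • C := by
    rw [log_mul (exp_ne_zero _) hμ.ne', log_exp, add_smul, add_comm]
  rw [momIntegrand_zero, momIntegrand, hlog, Matrix.exp_add_of_commute _ _
    (((Commute.refl C).smul_left _).smul_right _), smul_mul_assoc, Matrix.mul_assoc]
  congr 1
  set c := exp (-α₀ * t) with hc
  have hc₀ : c ≠ 0 := exp_ne_zero _
  have hinv : exp (α₀ * t) = c⁻¹ := by rw [hc, ← exp_neg, neg_mul, neg_neg]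
  have hpow : exp (j * α₀ * t) = (c ^ j)⁻¹ := by
    rw [hc, ← rpow_intCast, ← exp_mul, ← exp_neg]; ring_nf
  rw [hinv, hpow, ← neg_mul, ← hc, mul_zpow]
  field_simp

section LinftyOpNorm

attribute [local instance] Matrix.linftyOpNormedAddCommGroup Matrix.linftyOpNormedRing
  Matrix.linftyOpNormedAlgebra

theorem Matrix.norm_apply_le_linfty_opNorm {m n α : Type*} [Fintype m] [Fintype n]
    [DecidableEq n] [NormedRing α] [NormOneClass α] (A : Matrix m n α) (i : m) (k : n) :
    ‖A i k‖ ≤ ‖A‖ :=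
  calc ‖A i k‖ = ‖A.mulVec (Pi.single k 1) i‖ := by rw [Matrix.mulVec_single_one]; rfl
    _ ≤ ‖A.mulVec (Pi.single k 1)‖ := norm_le_pi_norm _ i
    _ ≤ ‖A‖ * ‖(Pi.single k 1 : n → α)‖ := Matrix.linfty_opNorm_mulVec _ _
    _ = ‖A‖ := by rw [Pi.norm_single, norm_one, mul_one]

theorem abs_mul_exp_log_smul_apply_le {n : Type*} [Fintype n] [DecidableEq n]
    (V C : Matrix n n ℝ) {l : ℝ} (hl : 0 < l) (x y : n) :
    |(V * NormedSpace.exp (log l • C)) x y| ≤ ‖V‖ * (l ^ ‖C‖ + l ^ (-‖C‖)) := by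
  have : Nonempty n := ⟨x⟩
  calc |(V * NormedSpace.exp (log l • C)) x y| ≤ ‖V * NormedSpace.exp (log l • C)‖ :=
        (norm_eq_abs _).symm.trans_le (Matrix.norm_apply_le_linfty_opNorm _ x y)
    _ ≤ ‖V‖ * ‖NormedSpace.exp (log l • C)‖ := norm_mul_le _ _
    _ ≤ ‖V‖ * (l ^ ‖C‖ + l ^ (-‖C‖)) := by gcongr; exact norm_exp_log_smul_le C hl

variable {α₀ α₁ α₂}

theorem integrableOn_momIntegrand_zero_apply (h₁ : α₁ / α₀ < 0) (h₂ : 0 < α₂ / α₀) (x y : Fin p) :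
    IntegrableOn (fun l => momIntegrand α₀ α₁ α₂ V C j 0 l x y) (Ioi 0) := by
  simp only [momIntegrand_zero, Matrix.smul_apply, smul_eq_mul]
  have hdom : IntegrableOn (fun l : ℝ => ‖V‖ *
      (l ^ ((j : ℝ) + ‖C‖) * exp (α₁ / α₀ * l - α₂ / α₀ * l⁻¹) +
        l ^ ((j : ℝ) - ‖C‖) * exp (α₁ / α₀ * l - α₂ / α₀ * l⁻¹))) (Ioi 0) :=
    ((integrableOn_rpow_mul_exp_mul_sub_inv h₁ h₂ _).add
      (integrableOn_rpow_mul_exp_mul_sub_inv h₁ h₂ _)).const_mul _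
  refine hdom.mono' ?_ ((ae_restrict_iff' measurableSet_Ioi).mpr (ae_of_all _ fun l hl => ?_))
  · refine ContinuousOn.aestronglyMeasurable (fun l hl => ?_) measurableSet_Ioi
    have hl : l ≠ 0 := (mem_Ioi.mp hl).ne'
    apply ContinuousAt.continuousWithinAt
    fun_prop (disch := simp [hl])
  · have hl : 0 < l := hl
    rw [norm_mul, norm_of_nonneg (by positivity), norm_eq_abs]
    calc l ^ j * exp (α₁ / α₀ * l - α₂ / α₀ * l⁻¹) * |(V * NormedSpace.exp (log l • C)) x y|
        ≤ l ^ j * exp (α₁ / α₀ * l - α₂ / α₀ * l⁻¹) * (‖V‖ * (l ^ ‖C‖ + l ^ (-‖C‖))) := by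
          gcongr
          exact abs_mul_exp_log_smul_apply_le V C hl x y
      _ = _ := by
          rw [rpow_add hl, rpow_sub hl, rpow_intCast, rpow_neg hl.le]
          field_simp

theorem momInt_eq_exp_smul_mul_exp (h₁ : α₁ / α₀ < 0) (h₂ : 0 < α₂ / α₀) (t : ℝ) :
    momInt p α₀ α₁ α₂ V C j t =
      exp (-α₀ * t) • (momInt p α₀ α₁ α₂ V C j 0 * NormedSpace.exp ((-α₀ * t) • C)) := by
  ext x y
  have hc := exp_pos (-α₀ * t)
  set E := NormedSpace.exp ((-α₀ * t) • C)
  calc momInt p α₀ α₁ α₂ V C j t x y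
      = exp (-α₀ * t) * ∫ μ in Ioi 0, momIntegrand α₀ α₁ α₂ V C j t (exp (-α₀ * t) * μ) x y := by
        rw [integral_comp_mul_left_Ioi (fun l => momIntegrand α₀ α₁ α₂ V C j t l x y) 0 hc,
          mul_zero, smul_eq_mul, mul_inv_cancel_left₀ hc.ne', momInt_apply]
    _ = exp (-α₀ * t) * ∫ μ in Ioi 0, ∑ k, momIntegrand α₀ α₁ α₂ V C j 0 μ x k * E k y := by
        congr 1
        refine setIntegral_congr_fun measurableSet_Ioi fun μ hμ => ?_
        rw [momIntegrand_exp_mul α₀ α₁ α₂ V C j t hμ, Matrix.mul_apply]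
    _ = exp (-α₀ * t) * ∑ k, momInt p α₀ α₁ α₂ V C j 0 x k * E k y := by
        rw [integral_finsetSum _ fun k _ =>
          (integrableOn_momIntegrand_zero_apply V C j h₁ h₂ x k).mul_const _]
        simp_rw [integral_mul_const, momInt_apply]
    _ = _ := by simp [Matrix.mul_apply]

theorem hasDerivAt_momInt_apply (h₁ : α₁ / α₀ < 0) (h₂ : 0 < α₂ / α₀) (t : ℝ) (x y : Fin p) :
    HasDerivAt (fun s => momInt p α₀ α₁ α₂ V C j s x y)
      (((-α₀) • (momInt p α₀ α₁ α₂ V C j t * (1 + C))) x y) t := by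
  have hm := momInt_eq_exp_smul_mul_exp V C j h₁ h₂
  refine ((Matrix.entryLinearMap ℝ ℝ x y).toContinuousLinearMap.hasFDerivAt.comp_hasDerivAt t
    (hasDerivAt_exp_smul_mul_exp_smul (-α₀) (momInt p α₀ α₁ α₂ V C j 0) C t)
    |>.congr_of_eventuallyEq (.of_forall fun s => ?_)).congr_deriv ?_
  · rw [hm s]; rfl
  · rw [hm t]; rfl

end LinftyOpNorm

end Moments

theorem statement18_general {p : ℕ} (α₀ α₁ α₂ : ℝ)
    (h₁ : α₁ / α₀ < 0) (h₂ : 0 < α₂ / α₀)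
    (V C : Matrix (Fin p) (Fin p) ℝ) :
    ∀ (j : ℤ) (t : ℝ) (x y : Fin p),
      HasDerivAt (fun s => momInt p α₀ α₁ α₂ V C j s x y)
        (((-α₀) • (momInt p α₀ α₁ α₂ V C j t * (1 + C))) x y) t :=
  fun j t x y => hasDerivAt_momInt_apply V C j h₁ h₂ t x y

/-- the moments `m_j(t)` are differentiable in `t` and satisfy
`m_j'(t) = -α₀ m_j(t) (I + C)`. -/
theorem statement18 {p : ℕ} (hp : 1 ≤ p) (α₀ α₁ α₂ : ℝ) (hα₀ : α₀ ≠ 0)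
    (h₁ : α₁ / α₀ < 0) (h₂ : 0 < α₂ / α₀)
    (V C : Matrix (Fin p) (Fin p) ℝ) :
    ∀ (j : ℤ) (t : ℝ) (x y : Fin p),
      HasDerivAt (fun s => momInt p α₀ α₁ α₂ V C j s x y)
        (((-α₀) • (momInt p α₀ α₁ α₂ V C j t * (1 + C))) x y) t :=
  statement18_general α₀ α₁ α₂ h₁ h₂ V C
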